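/- Let 0 < r < 1, let p(z) = (1/2)·Log((1+z)/(1−z)) on the open unit disk U, and let μ(w) = 1/(π·|sinh(2w)|). Then the integral of μ(w)² with respect to planar Lebesgue measure over the set {w ∈ ℂ : |Im w| < π/4} \ p(rU) is finite and equals (1/(2π))·ln(1/r), where rU = {z ∈ ℂ : |z| < r}. -/

import Mathlib

open Complex Metric Set MeasureTheory

/-!
The map `p = artanh` is the Cayley map `z ↦ (1 + z) / (1 - z)` of the unit disk onto the right
half-plane followed by `½ Log` of the half-plane onto the strip `|Im w| < π / 4`, so it maps `U`
biholomorphically onto the strip (with inverse `tanh w = (e^{2w} - 1) / (e^{2w} + 1)`), and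
`p' z = 1 / (1 - z²)`, `sinh (2 p z) = 2 z / (1 - z²)`. Hence `|p' z|² μ(p z)² = (2π|z|)⁻²`, and
the holomorphic change of variables turns the integral of `μ²` over the strip minus `p(rU)` into
the integral of `(2π|z|)⁻²` over the annulus `r ≤ |z| < 1`, which is `(1 / 2π) log (1 / r)` in
polar coordinates.
-/

namespace Complex

lemma norm_sub_one_lt_norm_add_one_iff {u : ℂ} : ‖u - 1‖ < ‖u + 1‖ ↔ 0 < u.re := by
  rw [← sq_lt_sq₀ (norm_nonneg _) (norm_nonneg _), ← normSq_eq_norm_sq, ← normSq_eq_norm_sq,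
    normSq_apply, normSq_apply]
  simp only [sub_re, add_re, one_re, sub_im, add_im, one_im, sub_zero, add_zero]
  constructor <;> intro h <;> nlinarith

lemma add_one_ne_zero_of_re_pos {u : ℂ} (hu : 0 < u.re) : u + 1 ≠ 0 := fun h => by
  have := congrArg re h
  simp only [add_re, one_re, zero_re] at this
  linarith

lemma one_add_ne_zero_of_norm_lt_one {z : ℂ} (hz : ‖z‖ < 1) : 1 + z ≠ 0 :=
  slitPlane_ne_zero (mem_slitPlane_of_norm_lt_one hz)

lemma one_sub_ne_zero_of_norm_lt_one {z : ℂ} (hz : ‖z‖ < 1) : 1 - z ≠ 0 := by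
  simpa [sub_eq_add_neg] using one_add_ne_zero_of_norm_lt_one (z := -z) (by simpa using hz)

lemma one_sub_sq_ne_zero_of_norm_lt_one {z : ℂ} (hz : ‖z‖ < 1) : 1 - z ^ 2 ≠ 0 := by
  rw [show 1 - z ^ 2 = (1 + z) * (1 - z) by ring]
  exact mul_ne_zero (one_add_ne_zero_of_norm_lt_one hz) (one_sub_ne_zero_of_norm_lt_one hz)

lemma re_one_add_div_one_sub_pos {z : ℂ} (hz : ‖z‖ < 1) : 0 < ((1 + z) / (1 - z)).re := by
  have hsub := one_sub_ne_zero_of_norm_lt_one hz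
  rw [← norm_sub_one_lt_norm_add_one_iff,
    show (1 + z) / (1 - z) - 1 = 2 * z / (1 - z) by field_simp; ring,
    show (1 + z) / (1 - z) + 1 = 2 / (1 - z) by field_simp; ring, norm_div, norm_div, norm_mul]
  gcongr
  simpa using hz

lemma norm_sub_one_div_add_one_lt_one {u : ℂ} (hu : 0 < u.re) : ‖(u - 1) / (u + 1)‖ < 1 := by
  rw [norm_div, div_lt_one (norm_pos_iff.2 (add_one_ne_zero_of_re_pos hu))]
  exact norm_sub_one_lt_norm_add_one_iff.2 hu

noncomputable def artanh (z : ℂ) : ℂ := 1 / 2 * log ((1 + z) / (1 - z))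

lemma exp_two_mul_artanh {z : ℂ} (hadd : 1 + z ≠ 0) (hsub : 1 - z ≠ 0) :
    exp (2 * artanh z) = (1 + z) / (1 - z) := by
  rw [artanh, ← mul_assoc, mul_one_div_cancel two_ne_zero, one_mul,
    exp_log (div_ne_zero hadd hsub)]

lemma sinh_two_mul_artanh {z : ℂ} (hadd : 1 + z ≠ 0) (hsub : 1 - z ≠ 0) :
    sinh (2 * artanh z) = 2 * z / (1 - z ^ 2) := by
  have h : 1 - z ^ 2 ≠ 0 := by
    rw [show 1 - z ^ 2 = (1 + z) * (1 - z) by ring]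
    exact mul_ne_zero hadd hsub
  rw [← mul_div_cancel_left₀ (sinh _) two_ne_zero, two_sinh, exp_neg,
    exp_two_mul_artanh hadd hsub]
  field_simp
  ring

lemma abs_im_artanh_lt {z : ℂ} (hz : ‖z‖ < 1) : |(artanh z).im| < Real.pi / 4 := by
  have harg := abs_arg_lt_pi_div_two_iff.2 (Or.inl (re_one_add_div_one_sub_pos hz))
  have him : (artanh z).im = arg ((1 + z) / (1 - z)) / 2 := by
    simp [artanh, log_im, div_eq_inv_mul]
  rw [him, abs_div, abs_two]
  linarith

lemma artanh_sub_one_div_add_one {u : ℂ} (hu : u + 1 ≠ 0) :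
    artanh ((u - 1) / (u + 1)) = 1 / 2 * log u := by
  rw [artanh]
  congr 2
  field_simp
  ring

lemma image_artanh_ball_one : artanh '' ball 0 1 = {w : ℂ | |w.im| < Real.pi / 4} := by
  ext w
  refine ⟨fun ⟨z, hz, hzw⟩ => hzw ▸ abs_im_artanh_lt (mem_ball_zero_iff.1 hz), fun hw => ?_⟩
  obtain ⟨hlow, hupp⟩ := abs_lt.1 (mem_ofPred.1 hw)
  have hπ := Real.pi_pos
  have him : (2 * w).im = 2 * w.im := by simp
  have hu : 0 < (exp (2 * w)).re := by
    rw [exp_re, him]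
    exact mul_pos (Real.exp_pos _) (Real.cos_pos_of_mem_Ioo ⟨by linarith, by linarith⟩)
  refine ⟨(exp (2 * w) - 1) / (exp (2 * w) + 1),
    mem_ball_zero_iff.2 (norm_sub_one_div_add_one_lt_one hu), ?_⟩
  rw [artanh_sub_one_div_add_one (add_one_ne_zero_of_re_pos hu),
    log_exp (by rw [him]; linarith) (by rw [him]; linarith)]
  ring

lemma injOn_artanh : InjOn artanh (ball 0 1) := by
  intro z₁ h₁ z₂ h₂ h
  rw [mem_ball_zero_iff] at h₁ h₂
  have h := congrArg (fun w => exp (2 * w)) h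
  simp only [exp_two_mul_artanh (one_add_ne_zero_of_norm_lt_one h₁)
      (one_sub_ne_zero_of_norm_lt_one h₁),
    exp_two_mul_artanh (one_add_ne_zero_of_norm_lt_one h₂)
      (one_sub_ne_zero_of_norm_lt_one h₂)] at h
  rw [div_eq_div_iff (one_sub_ne_zero_of_norm_lt_one h₁) (one_sub_ne_zero_of_norm_lt_one h₂)] at h
  linear_combination h / 2

lemma hasDerivAt_artanh {z : ℂ} (hz : ‖z‖ < 1) : HasDerivAt artanh (1 - z ^ 2)⁻¹ z := by
  have hadd := one_add_ne_zero_of_norm_lt_one hz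
  have hsub := one_sub_ne_zero_of_norm_lt_one hz
  have hsq := one_sub_sq_ne_zero_of_norm_lt_one hz
  have hq : HasDerivAt (fun x => (1 + x) / (1 - x)) (2 / (1 - z) ^ 2) z :=
    (((hasDerivAt_id' z).const_add 1).div ((hasDerivAt_id' z).const_sub 1) hsub).congr_deriv
      (by ring)
  refine (((hasDerivAt_log (mem_slitPlane_iff.2 (.inl (re_one_add_div_one_sub_pos hz)))).comp z
    hq).const_mul (1 / 2 : ℂ)).congr_deriv ?_
  field_simp
  ring

end Complex

lemma ContinuousLinearMap.det_restrictScalars_toSpanSingleton (c : ℂ) :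
    ((toSpanSingleton ℂ c).restrictScalars ℝ).det = normSq c := by
  rw [ContinuousLinearMap.det, coe_restrictScalars, LinearMap.det_restrictScalars,
    ← ContinuousLinearMap.det, det_toSpanSingleton, Algebra.norm_complex_apply]

section ChangeOfVariables

variable {F : Type*} [NormedAddCommGroup F] [NormedSpace ℝ F] {s : Set ℂ} {f f' : ℂ → ℂ}

theorem integrableOn_image_iff_integrableOn_normSq_deriv_smul (hs : MeasurableSet s)
    (hf' : ∀ z ∈ s, HasDerivWithinAt f (f' z) s z) (hf : InjOn f s) (g : ℂ → F) :
    IntegrableOn g (f '' s) ↔ IntegrableOn (fun z => normSq (f' z) • g (f z)) s := by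
  simpa only [ContinuousLinearMap.det_restrictScalars_toSpanSingleton,
    abs_of_nonneg (normSq_nonneg _)] using integrableOn_image_iff_integrableOn_abs_det_fderiv_smul
      volume hs (fun z hz => (hf' z hz).hasFDerivWithinAt.restrictScalars ℝ) hf g

theorem integral_image_eq_integral_normSq_deriv_smul (hs : MeasurableSet s)
    (hf' : ∀ z ∈ s, HasDerivWithinAt f (f' z) s z) (hf : InjOn f s) (g : ℂ → F) :
    ∫ w in f '' s, g w = ∫ z in s, normSq (f' z) • g (f z) := by
  simpa only [ContinuousLinearMap.det_restrictScalars_toSpanSingleton,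
    abs_of_nonneg (normSq_nonneg _)] using integral_image_eq_integral_abs_det_fderiv_smul
      volume hs (fun z hz => (hf' z hz).hasFDerivWithinAt.restrictScalars ℝ) hf g

end ChangeOfVariables

lemma integrableOn_inv_norm_sq_annulus {a : ℝ} (ha : 0 < a) (b : ℝ) :
    IntegrableOn (fun z : ℂ => (‖z‖ ^ 2)⁻¹) (ball 0 b \ ball 0 a) := by
  refine (ContinuousOn.integrableOn_compact ((isCompact_closedBall 0 b).diff isOpen_ball)
    ?_).mono_set (sdiff_subset_sdiff_left ball_subset_closedBall)
  refine (continuous_norm.pow 2).continuousOn.inv₀ fun z hz => ?_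
  have : a ≤ ‖z‖ := by simpa using hz.2
  exact pow_ne_zero 2 (ha.trans_le this).ne'

lemma integral_annulus_fun_norm {a : ℝ} (ha : 0 < a) (b : ℝ) (f : ℝ → ℝ) :
    ∫ z in ball (0 : ℂ) b \ ball 0 a, f ‖z‖ = 2 * Real.pi * ∫ t in Ico a b, t * f t := by
  have hannulus : ball (0 : ℂ) b \ ball 0 a = (‖·‖) ⁻¹' Ico a b := by
    ext z
    simp [and_comm]
  have hind : ∫ z in ball (0 : ℂ) b \ ball 0 a, f ‖z‖ = ∫ z : ℂ, (Ico a b).indicator f ‖z‖ := by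
    rw [← integral_indicator (measurableSet_ball.diff measurableSet_ball), hannulus]
    exact integral_congr_ae (.of_forall fun z => indicator_comp_right (g := f) norm)
  have hsmul (t : ℝ) :
      t ^ (2 - 1) • (Ico a b).indicator f t = (Ico a b).indicator (fun t => t * f t) t := by
    simp [indicator_apply]
  rw [hind, integral_fun_norm_addHaar, finrank_real_complex, measureReal_def, Complex.volume_ball]
  simp only [hsmul]
  rw [setIntegral_indicator measurableSet_Ico,
    inter_eq_right.2 (Ico_subset_Ici_self.trans (Ici_subset_Ioi.2 ha))]
  simp only [ENNReal.ofReal_one, one_pow, one_mul, ENNReal.coe_toReal, NNReal.coe_real_pi,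
    smul_eq_mul, nsmul_eq_mul, Nat.cast_ofNat]
  ring

lemma integral_inv_norm_sq_annulus {a b : ℝ} (ha : 0 < a) (hab : a ≤ b) :
    ∫ z in ball (0 : ℂ) b \ ball 0 a, (‖z‖ ^ 2)⁻¹ = 2 * Real.pi * Real.log (b / a) := by
  have hinv : EqOn (fun t : ℝ => t * (t ^ 2)⁻¹) (·⁻¹) (Ico a b) := fun t ht => by
    have : t ≠ 0 := (ha.trans_le ht.1).ne'
    field_simp
  rw [integral_annulus_fun_norm ha b (fun t => (t ^ 2)⁻¹),
    setIntegral_congr_fun measurableSet_Ico hinv, integral_Ico_eq_integral_Ioo,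
    ← integral_Ioc_eq_integral_Ioo, ← intervalIntegral.integral_of_le hab,
    integral_inv (notMem_uIcc_of_lt ha (ha.trans_le hab))]

/-- The density `μ` on the strip. -/
noncomputable def stripDensity (w : ℂ) : ℝ := 1 / (Real.pi * ‖sinh (2 * w)‖)

lemma normSq_inv_one_sub_sq_mul_stripDensity_artanh_sq {z : ℂ} (hz : ‖z‖ < 1) :
    normSq (1 - z ^ 2)⁻¹ * stripDensity (artanh z) ^ 2 =
      (4 * Real.pi ^ 2)⁻¹ * (‖z‖ ^ 2)⁻¹ := by
  rcases eq_or_ne z 0 with rfl | hz0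
  · simp [stripDensity, artanh]
  have hsq := norm_ne_zero_iff.2 (one_sub_sq_ne_zero_of_norm_lt_one hz)
  have hnorm := norm_ne_zero_iff.2 hz0
  rw [stripDensity, sinh_two_mul_artanh (one_add_ne_zero_of_norm_lt_one hz)
    (one_sub_ne_zero_of_norm_lt_one hz), map_inv₀, normSq_eq_norm_sq, norm_div, norm_mul,
    Complex.norm_two]
  field_simp
  norm_num

/-- For `0 < r < 1`, `p(z) = (1/2)·Log((1+z)/(1-z))` and
`μ(w) = 1/(π·|sinh(2w)|)`, the integral of `μ²` over the part of the strip
`{|Im w| < π/4}` outside `p(rU)` is finite and equals `(1/(2π))·ln(1/r)`. -/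
theorem integral_mu_sq_outside_image_of_small_disk (r : ℝ) (hr0 : 0 < r) (hr1 : r < 1) :
    IntegrableOn
      (fun w : ℂ => (1 / (Real.pi * ‖Complex.sinh (2 * w)‖)) ^ 2)
      ({w : ℂ | |w.im| < Real.pi / 4} \
        (fun z : ℂ => (1 / 2) * Complex.log ((1 + z) / (1 - z))) '' ball (0 : ℂ) r)
      volume ∧
    ∫ w in ({w : ℂ | |w.im| < Real.pi / 4} \
        (fun z : ℂ => (1 / 2) * Complex.log ((1 + z) / (1 - z))) '' ball (0 : ℂ) r),
      (1 / (Real.pi * ‖Complex.sinh (2 * w)‖)) ^ 2 ∂volume =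
      (1 / (2 * Real.pi)) * Real.log (1 / r) := by
  change IntegrableOn (fun w => stripDensity w ^ 2)
      ({w : ℂ | |w.im| < Real.pi / 4} \ artanh '' ball 0 r) volume ∧
    ∫ w in {w : ℂ | |w.im| < Real.pi / 4} \ artanh '' ball 0 r, stripDensity w ^ 2 = _
  set A := ball (0 : ℂ) 1 \ ball 0 r
  have hA : MeasurableSet A := measurableSet_ball.diff measurableSet_ball
  have hset : {w : ℂ | |w.im| < Real.pi / 4} \ artanh '' ball 0 r = artanh '' A := by
    rw [← image_artanh_ball_one, injOn_artanh.image_sdiff_subset (ball_subset_ball hr1.le)]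
  have hderiv (z) (hz : z ∈ A) : HasDerivWithinAt artanh (1 - z ^ 2)⁻¹ A z :=
    (hasDerivAt_artanh (mem_ball_zero_iff.1 hz.1)).hasDerivWithinAt
  have hinj : InjOn artanh A := injOn_artanh.mono sdiff_subset
  have hdensity : EqOn (fun z => normSq (1 - z ^ 2)⁻¹ • stripDensity (artanh z) ^ 2)
      (fun z => (4 * Real.pi ^ 2)⁻¹ * (‖z‖ ^ 2)⁻¹) A := fun z hz =>
    normSq_inv_one_sub_sq_mul_stripDensity_artanh_sq (mem_ball_zero_iff.1 hz.1)
  rw [hset, integrableOn_image_iff_integrableOn_normSq_deriv_smul hA hderiv hinj,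
    integral_image_eq_integral_normSq_deriv_smul hA hderiv hinj,
    integrableOn_congr_fun hdensity hA, setIntegral_congr_fun hA hdensity, integral_const_mul,
    integral_inv_norm_sq_annulus hr0 hr1.le]
  refine ⟨(integrableOn_inv_norm_sq_annulus hr0 1).const_mul _, ?_⟩
  field_simp
  ring
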